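/- Let F : ℝ^n × ℝ^m → ℝ^n and G : ℝ^n × ℝ^m → ℝ^m be continuously differentiable, and let (U*, M*) satisfy F(U*, M*) = 0 and G(U*, M*) = 0. Denote F_u = ∂F/∂U(U*,M*) ∈ ℝ^{n×n}, F_m = ∂F/∂M(U*,M*) ∈ ℝ^{n×m}, G_u = ∂G/∂U(U*,M*) ∈ ℝ^{m×n}, G_m = ∂G/∂M(U*,M*) ∈ ℝ^{m×m}, and assume F_u and G_m are invertible. If the spectral radius ρ' := ρ(F_u^{-1} F_m G_m^{-1} G_u) < 1, then the alternating sweeping iteration converges locally in U: there exist neighborhoods 𝒰 of U* and ℳ of M* such that for every pair of sequences (U_k)_{k≥1} ⊆ 𝒰 and (M_k)_{k≥0} ⊆ ℳ satisfying F(U_k, M_{k-1}) = 0 and G(U_k, M_k) = 0 for all k ≥ 1, one has U_k → U*, and moreover limsup_{k→∞} ‖U_k − U*‖^{1/k} ≤ ρ'. -/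

import Mathlib

open Filter Topology

/-- The spectral radius of a square real matrix: the maximum of the moduli of
its complex eigenvalues. -/
noncomputable def specRad {n : ℕ} (A : Matrix (Fin n) (Fin n) ℝ) : ℝ :=
  sSup ((fun z : ℂ => ‖z‖) '' spectrum ℂ (A.map (algebraMap ℝ ℂ)))

/-!
Write `u = U - U*`, `m = M - M*` and `A = F_u⁻¹ F_m G_m⁻¹ G_u`. Linearizing the equations
`F (U_{k+1}, M_k) = 0` and `G (U_k, M_k) = 0` at `(U*, M*)` and solving them with `F_u⁻¹` and
`G_m⁻¹` gives `m_k = O(u_k)` and `u_{k+1} = A u_k + o(u_k)`. For `ρ(A) < r < s`, Gelfand's formula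
gives `N ≥ 1` with `‖A ^ N‖ ≤ r ^ N`, and in the equivalent norm `ν x = ∑_{i<N} ‖A ^ i x‖ / r ^ i`
the matrix `A` contracts by `r`; near `(U*, M*)` the `o(u_k)` term costs at most `s - r`, so
`ν (u_{k+1}) ≤ s ν (u_k)`. Taking `s < 1` gives convergence, after which the iterates enter every
smaller neighbourhood, so the rate `s` holds along a tail for every `s > ρ(A)`.
-/

open scoped Matrix

attribute [local instance] Matrix.linftyOpNormedRing Matrix.linftyOpNormedAlgebra
  Matrix.linftyOpNormedAddCommGroup

lemma specRad_nonneg {n : ℕ} (A : Matrix (Fin n) (Fin n) ℝ) : 0 ≤ specRad A :=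
  Real.sSup_nonneg <| by rintro _ ⟨z, -, rfl⟩; exact norm_nonneg z

lemma Matrix.linfty_opNorm_map_ofReal {ι : Type*} [Fintype ι] (A : Matrix ι ι ℝ) :
    ‖A.map (algebraMap ℝ ℂ)‖ = ‖A‖ := by
  simp only [Matrix.linfty_opNorm_def, Matrix.map_apply, Complex.coe_algebraMap,
    Complex.nnnorm_real]

lemma spectralRadius_map_le_specRad {n : ℕ} (A : Matrix (Fin n) (Fin n) ℝ) :
    spectralRadius ℂ (A.map (algebraMap ℝ ℂ)) ≤ ENNReal.ofReal (specRad A) := by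
  have hbdd := ((spectrum.isCompact (A.map (algebraMap ℝ ℂ))).image
    (continuous_norm (E := ℂ))).bddAbove
  refine iSup₂_le fun z hz => ?_
  rw [← enorm_eq_nnnorm, ← ofReal_norm]
  exact ENNReal.ofReal_le_ofReal (le_csSup hbdd ⟨z, hz, rfl⟩)

/-- Gelfand's formula, applied to the complexification of `A`. -/
lemma exists_norm_pow_lt_pow_of_specRad_lt {n : ℕ} {A : Matrix (Fin n) (Fin n) ℝ} {r : ℝ}
    (hr : specRad A < r) : ∃ N, 1 ≤ N ∧ ‖A ^ N‖ < r ^ N := by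
  have hr0 : 0 < r := (specRad_nonneg A).trans_lt hr
  have hlt : spectralRadius ℂ (A.map (algebraMap ℝ ℂ)) < ENNReal.ofReal r :=
    (spectralRadius_map_le_specRad A).trans_lt ((ENNReal.ofReal_lt_ofReal_iff hr0).2 hr)
  obtain ⟨N, hN, hN1⟩ := (((spectrum.pow_norm_pow_one_div_tendsto_nhds_spectralRadius _).eventually
    (gt_mem_nhds hlt)).and (eventually_ge_atTop 1)).exists
  refine ⟨N, hN1, ?_⟩
  rw [ENNReal.ofReal_lt_ofReal_iff hr0, ← Matrix.map_pow, Matrix.linfty_opNorm_map_ofReal,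
    one_div, Real.rpow_inv_lt_iff_of_pos (norm_nonneg _) hr0.le (by positivity)] at hN
  exact_mod_cast hN

section AdaptedNorm

variable {ι : Type*} [Fintype ι] [DecidableEq ι] (A : Matrix ι ι ℝ) (r : ℝ) (N : ℕ)

noncomputable def adaptedNorm (x : ι → ℝ) : ℝ :=
  ∑ i ∈ Finset.range N, ‖A ^ i *ᵥ x‖ / r ^ i

variable {A r N}

lemma norm_le_adaptedNorm (hr : 0 ≤ r) (hN : 1 ≤ N) (x : ι → ℝ) :
    ‖x‖ ≤ adaptedNorm A r N x := by
  simpa [adaptedNorm] using Finset.single_le_sum (f := fun i => ‖A ^ i *ᵥ x‖ / r ^ i)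
    (fun i _ => by positivity) (Finset.mem_range.2 hN)

lemma adaptedNorm_le (hr : 0 ≤ r) (x : ι → ℝ) :
    adaptedNorm A r N x ≤ (∑ i ∈ Finset.range N, ‖A ^ i‖ / r ^ i) * ‖x‖ := by
  rw [adaptedNorm, Finset.sum_mul]
  gcongr with i
  rw [div_mul_eq_mul_div]
  gcongr
  exact Matrix.linfty_opNorm_mulVec _ _

lemma adaptedNorm_add_le (hr : 0 ≤ r) (x y : ι → ℝ) :
    adaptedNorm A r N (x + y) ≤ adaptedNorm A r N x + adaptedNorm A r N y := by
  rw [adaptedNorm, adaptedNorm, adaptedNorm, ← Finset.sum_add_distrib]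
  gcongr with i
  rw [Matrix.mulVec_add, ← add_div]
  gcongr
  exact norm_add_le _ _

/-- Shifting the sum by one index trades the term `‖x‖` for `‖A ^ N x‖ / r ^ N ≤ ‖x‖`. -/
lemma adaptedNorm_mulVec_le (hr : 0 < r) (hA : ‖A ^ N‖ ≤ r ^ N) (x : ι → ℝ) :
    adaptedNorm A r N (A *ᵥ x) ≤ r * adaptedNorm A r N x := by
  have hshift : adaptedNorm A r N (A *ᵥ x) =
      r * ∑ i ∈ Finset.range N, ‖A ^ (i + 1) *ᵥ x‖ / r ^ (i + 1) := by
    rw [adaptedNorm, Finset.mul_sum]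
    refine Finset.sum_congr rfl fun i _ => ?_
    rw [Matrix.mulVec_mulVec, ← pow_succ, pow_succ r]
    field_simp
  have hlast : ‖A ^ N *ᵥ x‖ / r ^ N ≤ ‖x‖ := by
    rw [div_le_iff₀ (by positivity)]
    calc ‖A ^ N *ᵥ x‖ ≤ ‖A ^ N‖ * ‖x‖ := Matrix.linfty_opNorm_mulVec _ _
      _ ≤ r ^ N * ‖x‖ := by gcongr
      _ = ‖x‖ * r ^ N := mul_comm _ _
  have hsplit := Finset.sum_range_succ' (fun i => ‖A ^ i *ᵥ x‖ / r ^ i) N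
  rw [Finset.sum_range_succ] at hsplit
  simp only [pow_zero, Matrix.one_mulVec, div_one] at hsplit
  rw [hshift, adaptedNorm]
  exact mul_le_mul_of_nonneg_left (by linarith) hr.le

end AdaptedNorm

lemma exists_norm_le_geometric_of_perturbed {n : ℕ} {A : Matrix (Fin n) (Fin n) ℝ} {s : ℝ}
    (hs : specRad A < s) :
    ∃ ε > 0, ∃ D, ∀ e : ℕ → Fin n → ℝ, (∀ k, ‖e (k + 1) - A *ᵥ e k‖ ≤ ε * ‖e k‖) →
      ∀ k, ‖e k‖ ≤ D * s ^ k * ‖e 0‖ := by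
  obtain ⟨r, hρr, hrs⟩ := exists_between hs
  have hr : 0 < r := (specRad_nonneg A).trans_lt hρr
  have hs0 : 0 < s := hr.trans hrs
  obtain ⟨N, hN, hAN⟩ := exists_norm_pow_lt_pow_of_specRad_lt hρr
  set D := ∑ i ∈ Finset.range N, ‖A ^ i‖ / r ^ i
  have hD : 0 ≤ D := Finset.sum_nonneg fun i _ => by positivity
  refine ⟨(s - r) / (D + 1), div_pos (by linarith) (by linarith), D, fun e he k => ?_⟩
  have hDε : D * ((s - r) / (D + 1)) ≤ s - r := by
    rw [mul_div_assoc', div_le_iff₀ (by linarith)]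
    nlinarith
  have hstep : ∀ k, adaptedNorm A r N (e (k + 1)) ≤ s * adaptedNorm A r N (e k) := fun k => by
    calc adaptedNorm A r N (e (k + 1))
        = adaptedNorm A r N (A *ᵥ e k + (e (k + 1) - A *ᵥ e k)) := by rw [add_sub_cancel]
      _ ≤ r * adaptedNorm A r N (e k) + D * ‖e (k + 1) - A *ᵥ e k‖ :=
          (adaptedNorm_add_le hr.le _ _).trans
            (add_le_add (adaptedNorm_mulVec_le hr hAN.le _) (adaptedNorm_le hr.le _))
      _ ≤ r * adaptedNorm A r N (e k) + D * ((s - r) / (D + 1)) * ‖e k‖ := by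
          rw [mul_assoc]; gcongr; exact he k
      _ ≤ r * adaptedNorm A r N (e k) + (s - r) * adaptedNorm A r N (e k) := by
          gcongr
          exact norm_le_adaptedNorm hr.le hN _
      _ = s * adaptedNorm A r N (e k) := by ring
  calc ‖e k‖ ≤ adaptedNorm A r N (e k) := norm_le_adaptedNorm hr.le hN _
    _ ≤ s ^ k * adaptedNorm A r N (e 0) :=
        le_geom (u := fun k => adaptedNorm A r N (e k)) hs0.le k fun k _ => hstep k
    _ ≤ s ^ k * (D * ‖e 0‖) := by
        gcongr
        exact adaptedNorm_le hr.le _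
    _ = D * s ^ k * ‖e 0‖ := by ring

lemma limsup_rpow_inv_le_of_eventually_le_geometric {x : ℕ → ℝ} {E s : ℝ} (hx : ∀ k, 0 ≤ x k)
    (hs : 0 < s) (h : ∀ᶠ k in atTop, x k ≤ E * s ^ k) :
    limsup (fun k => x k ^ (k : ℝ)⁻¹) atTop ≤ s := by
  set E' := max E 1
  have hE' : 0 < E' := lt_max_of_lt_right one_pos
  have hlim : Tendsto (fun k : ℕ => E' ^ (k : ℝ)⁻¹ * s) atTop (𝓝 s) := by
    simpa using ((Real.continuousAt_const_rpow hE'.ne').tendsto.comp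
      tendsto_inv_atTop_nhds_zero_nat).mul_const s
  have hle : ∀ᶠ k : ℕ in atTop, x k ^ (k : ℝ)⁻¹ ≤ E' ^ (k : ℝ)⁻¹ * s := by
    filter_upwards [h, eventually_ge_atTop 1] with k hk hk1
    have hk0 : (k : ℝ) ≠ 0 := by positivity
    calc x k ^ (k : ℝ)⁻¹ ≤ (E' * s ^ k) ^ (k : ℝ)⁻¹ := by
          gcongr
          · exact hx k
          · exact hk.trans (by gcongr; exact le_max_left _ _)
      _ = E' ^ (k : ℝ)⁻¹ * s := by
          rw [Real.mul_rpow hE'.le (by positivity), Real.pow_rpow_inv_natCast hs.le (by positivity)]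
  calc limsup (fun k => x k ^ (k : ℝ)⁻¹) atTop
      ≤ limsup (fun k : ℕ => E' ^ (k : ℝ)⁻¹ * s) atTop :=
        limsup_le_limsup hle (isCoboundedUnder_le_of_le atTop fun k =>
          Real.rpow_nonneg (hx k) _) hlim.isBoundedUnder_le
    _ = s := hlim.limsup_eq

lemma limsup_norm_rpow_inv_le_specRad {n : ℕ} {A : Matrix (Fin n) (Fin n) ℝ}
    {e : ℕ → Fin n → ℝ} (h : ∀ ε > 0, ∀ᶠ k in atTop, ‖e (k + 1) - A *ᵥ e k‖ ≤ ε * ‖e k‖) :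
    limsup (fun k => ‖e k‖ ^ (k : ℝ)⁻¹) atTop ≤ specRad A := by
  refine le_of_forall_gt_imp_ge_of_dense fun s hs => ?_
  have hs0 : 0 < s := (specRad_nonneg A).trans_lt hs
  obtain ⟨ε, hε, D, hD⟩ := exists_norm_le_geometric_of_perturbed hs
  obtain ⟨K, hK⟩ := (h ε hε).exists_forall_of_atTop
  refine limsup_rpow_inv_le_of_eventually_le_geometric (fun k => norm_nonneg _) hs0
    (E := D * ‖e K‖ / s ^ K) ?_
  filter_upwards [eventually_ge_atTop K] with k hk
  obtain ⟨j, rfl⟩ := Nat.exists_eq_add_of_le hk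
  calc ‖e (K + j)‖ ≤ D * s ^ j * ‖e K‖ := hD (fun j => e (K + j)) (fun j => hK _ le_self_add) j
    _ = D * ‖e K‖ / s ^ K * s ^ (K + j) := by rw [pow_add]; field_simp

section Residuals

variable {ι κ : Type*} [Fintype ι] [Fintype κ] [DecidableEq ι] [DecidableEq κ]

omit [DecidableEq κ] in
lemma norm_le_of_norm_mulVec_add_le {B : Matrix ι ι ℝ} {P : Matrix ι κ ℝ} (hB : IsUnit B)
    {c : ℝ} (hc : c * ‖B⁻¹‖ ≤ 1 / 2) {x : ι → ℝ} {y : κ → ℝ}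
    (h : ‖B *ᵥ x + P *ᵥ y‖ ≤ c * (‖x‖ + ‖y‖)) : ‖x‖ ≤ (1 + 2 * ‖B⁻¹ * P‖) * ‖y‖ := by
  have hx : x = B⁻¹ *ᵥ (B *ᵥ x + P *ᵥ y) - (B⁻¹ * P) *ᵥ y := by
    rw [Matrix.mulVec_add, Matrix.mulVec_mulVec, Matrix.mulVec_mulVec,
      Matrix.nonsing_inv_mul _ ((Matrix.isUnit_iff_isUnit_det B).1 hB), Matrix.one_mulVec,
      add_sub_cancel_right]
  have hle : ‖x‖ ≤ c * ‖B⁻¹‖ * (‖x‖ + ‖y‖) + ‖B⁻¹ * P‖ * ‖y‖ :=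
    calc ‖x‖ = ‖B⁻¹ *ᵥ (B *ᵥ x + P *ᵥ y) - (B⁻¹ * P) *ᵥ y‖ := congrArg _ hx
      _ ≤ ‖B⁻¹ *ᵥ (B *ᵥ x + P *ᵥ y)‖ + ‖(B⁻¹ * P) *ᵥ y‖ := norm_sub_le _ _
      _ ≤ ‖B⁻¹‖ * (c * (‖x‖ + ‖y‖)) + ‖B⁻¹ * P‖ * ‖y‖ := by
          gcongr
          · exact (Matrix.linfty_opNorm_mulVec _ _).trans (by gcongr)
          · exact Matrix.linfty_opNorm_mulVec _ _
      _ = c * ‖B⁻¹‖ * (‖x‖ + ‖y‖) + ‖B⁻¹ * P‖ * ‖y‖ := by ring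
  nlinarith [mul_le_mul_of_nonneg_right hc (add_nonneg (norm_nonneg x) (norm_nonneg y))]

lemma sub_mulVec_eq_of_residuals {Fu : Matrix ι ι ℝ} {Fm : Matrix ι κ ℝ} {Gu : Matrix κ ι ℝ}
    {Gm : Matrix κ κ ℝ} (hFu : Fu⁻¹ * Fu = 1) (hGm : Gm⁻¹ * Gm = 1) (u u' : ι → ℝ)
    (m : κ → ℝ) :
    u' - (Fu⁻¹ * Fm * Gm⁻¹ * Gu) *ᵥ u =
      Fu⁻¹ *ᵥ (Fu *ᵥ u' + Fm *ᵥ m) - (Fu⁻¹ * Fm * Gm⁻¹) *ᵥ (Gu *ᵥ u + Gm *ᵥ m) := by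
  simp only [Matrix.mulVec_add, Matrix.mulVec_mulVec, hFu, Matrix.one_mulVec,
    Matrix.mul_assoc (Fu⁻¹ * Fm) Gm⁻¹ Gm, hGm, Matrix.mul_one]
  abel

lemma exists_sweep_residual_bound {Fu : Matrix ι ι ℝ} {Fm : Matrix ι κ ℝ} {Gu : Matrix κ ι ℝ}
    {Gm : Matrix κ κ ℝ} (hFu : IsUnit Fu) (hGm : IsUnit Gm) :
    ∃ C, ∀ ε > 0, ∃ c > 0, ∀ (u u' : ι → ℝ) (m : κ → ℝ),
      ‖Fu *ᵥ u' + Fm *ᵥ m‖ ≤ c * (‖u'‖ + ‖m‖) → ‖Gu *ᵥ u + Gm *ᵥ m‖ ≤ c * (‖u‖ + ‖m‖) →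
      ‖u' - (Fu⁻¹ * Fm * Gm⁻¹ * Gu) *ᵥ u‖ ≤ ε * ‖u‖ ∧ ‖m‖ ≤ C * ‖u‖ := by
  set C₁ := 1 + 2 * ‖Fu⁻¹ * Fm‖
  set C₂ := 1 + 2 * ‖Gm⁻¹ * Gu‖
  set K := ‖Fu⁻¹‖ * (C₁ * C₂ + C₂) + ‖Fu⁻¹ * Fm * Gm⁻¹‖ * (1 + C₂)
  have hC₁ : 0 ≤ C₁ := by positivity
  have hC₂ : 0 ≤ C₂ := by positivity
  have hsmall : ∀ a b : ℝ, 0 < b → ∀ᶠ c in 𝓝[>] 0, c * a < b := fun a b hb =>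
    nhdsWithin_le_nhds <|
      (continuous_mul_const a).tendsto' 0 0 (zero_mul a) |>.eventually_lt_const hb
  refine ⟨C₂, fun ε hε => ?_⟩
  obtain ⟨c, ⟨⟨hcF, hcG⟩, hcK⟩, hc⟩ := ((((hsmall ‖Fu⁻¹‖ (1 / 2) (by norm_num)).and
    (hsmall ‖Gm⁻¹‖ (1 / 2) (by norm_num))).and (hsmall K ε hε)).and self_mem_nhdsWithin).exists
  refine ⟨c, hc, fun u u' m hF hG => ?_⟩
  have hm : ‖m‖ ≤ C₂ * ‖u‖ :=
    norm_le_of_norm_mulVec_add_le hGm hcG.le (by rwa [add_comm, add_comm ‖m‖])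
  have hu' : ‖u'‖ ≤ C₁ * ‖m‖ := norm_le_of_norm_mulVec_add_le hFu hcF.le hF
  refine ⟨?_, hm⟩
  rw [sub_mulVec_eq_of_residuals
    (Matrix.nonsing_inv_mul _ ((Matrix.isUnit_iff_isUnit_det Fu).1 hFu))
    (Matrix.nonsing_inv_mul _ ((Matrix.isUnit_iff_isUnit_det Gm).1 hGm))]
  calc _ ≤ ‖Fu⁻¹‖ * (c * (‖u'‖ + ‖m‖)) + ‖Fu⁻¹ * Fm * Gm⁻¹‖ * (c * (‖u‖ + ‖m‖)) :=
        (norm_sub_le _ _).trans (add_le_add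
          ((Matrix.linfty_opNorm_mulVec _ _).trans (by gcongr))
          ((Matrix.linfty_opNorm_mulVec _ _).trans (by gcongr)))
    _ ≤ ‖Fu⁻¹‖ * (c * ((C₁ * C₂ + C₂) * ‖u‖)) +
          ‖Fu⁻¹ * Fm * Gm⁻¹‖ * (c * ((1 + C₂) * ‖u‖)) := by
        gcongr
        · nlinarith [mul_le_mul_of_nonneg_left hm hC₁]
        · linarith
    _ = c * K * ‖u‖ := by ring
    _ ≤ ε * ‖u‖ := by gcongr

end Residuals

lemma eventually_norm_fderiv_le_of_eq_zero {E E' F : Type*} [NormedAddCommGroup E]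
    [NormedSpace ℝ E] [NormedAddCommGroup E'] [NormedSpace ℝ E'] [NormedAddCommGroup F]
    [NormedSpace ℝ F] {f : E × E' → F} {x : E × E'} (hf : DifferentiableAt ℝ f x) (hx : f x = 0)
    {c : ℝ} (hc : 0 < c) :
    ∀ᶠ y in 𝓝 x, f y = 0 →
      ‖fderiv ℝ f x (y.1 - x.1, y.2 - x.2)‖ ≤ c * (‖y.1 - x.1‖ + ‖y.2 - x.2‖) := by
  filter_upwards [hf.hasFDerivAt.isLittleO.def hc] with y hy hfy
  simp only [hfy, hx, sub_zero, zero_sub, norm_neg] at hy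
  refine hy.trans (mul_le_mul_of_nonneg_left ?_ hc.le)
  exact max_le_add_of_nonneg (norm_nonneg _) (norm_nonneg _)

lemma sweep_local_estimate {ι κ : Type*} [Fintype ι] [Fintype κ] [DecidableEq ι]
    [DecidableEq κ] {F : (ι → ℝ) × (κ → ℝ) → (ι → ℝ)} {G : (ι → ℝ) × (κ → ℝ) → (κ → ℝ)}
    {Ustar : ι → ℝ} {Mstar : κ → ℝ} (hF : DifferentiableAt ℝ F (Ustar, Mstar))
    (hG : DifferentiableAt ℝ G (Ustar, Mstar))
    (hFstar : F (Ustar, Mstar) = 0) (hGstar : G (Ustar, Mstar) = 0)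
    {Fu : Matrix ι ι ℝ} {Fm : Matrix ι κ ℝ} {Gu : Matrix κ ι ℝ} {Gm : Matrix κ κ ℝ}
    (hdF : ∀ du dm, fderiv ℝ F (Ustar, Mstar) (du, dm) = Fu *ᵥ du + Fm *ᵥ dm)
    (hdG : ∀ du dm, fderiv ℝ G (Ustar, Mstar) (du, dm) = Gu *ᵥ du + Gm *ᵥ dm)
    (hFu : IsUnit Fu) (hGm : IsUnit Gm) :
    ∃ C, ∀ ε > 0, ∀ᶠ p : (ι → ℝ) × (ι → ℝ) × (κ → ℝ) in 𝓝 (Ustar, Ustar, Mstar),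
      F p.2 = 0 → G (p.1, p.2.2) = 0 →
      ‖(p.2.1 - Ustar) - (Fu⁻¹ * Fm * Gm⁻¹ * Gu) *ᵥ (p.1 - Ustar)‖ ≤ ε * ‖p.1 - Ustar‖ ∧
        ‖p.2.2 - Mstar‖ ≤ C * ‖p.1 - Ustar‖ := by
  obtain ⟨C, hC⟩ := exists_sweep_residual_bound (Fm := Fm) (Gu := Gu) hFu hGm
  refine ⟨C, fun ε hε => ?_⟩
  obtain ⟨c, hc, hres⟩ := hC ε hε
  have hFres := (continuous_snd.tendsto (Ustar, Ustar, Mstar)).eventually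
    (eventually_norm_fderiv_le_of_eq_zero hF hFstar hc)
  have hGres := ((by fun_prop : Continuous fun p : (ι → ℝ) × (ι → ℝ) × (κ → ℝ) =>
    (p.1, p.2.2)).tendsto (Ustar, Ustar, Mstar)).eventually
      (eventually_norm_fderiv_le_of_eq_zero hG hGstar hc)
  filter_upwards [hFres, hGres] with p hpF hpG hFp hGp
  rw [hdF] at hpF
  rw [hdG] at hpG
  exact hres _ _ _ (hpF hFp) (hpG hGp)

theorem alternating_sweeping_local_convergence_in_U (n m : ℕ)
    (F : (Fin n → ℝ) × (Fin m → ℝ) → (Fin n → ℝ))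
    (G : (Fin n → ℝ) × (Fin m → ℝ) → (Fin m → ℝ))
    (hF : ContDiff ℝ 1 F) (hG : ContDiff ℝ 1 G)
    (Ustar : Fin n → ℝ) (Mstar : Fin m → ℝ)
    (hFstar : F (Ustar, Mstar) = 0) (hGstar : G (Ustar, Mstar) = 0)
    (Fu : Matrix (Fin n) (Fin n) ℝ) (Fm : Matrix (Fin n) (Fin m) ℝ)
    (Gu : Matrix (Fin m) (Fin n) ℝ) (Gm : Matrix (Fin m) (Fin m) ℝ)
    (hdF : ∀ (du : Fin n → ℝ) (dm : Fin m → ℝ),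
      fderiv ℝ F (Ustar, Mstar) (du, dm) = Fu.mulVec du + Fm.mulVec dm)
    (hdG : ∀ (du : Fin n → ℝ) (dm : Fin m → ℝ),
      fderiv ℝ G (Ustar, Mstar) (du, dm) = Gu.mulVec du + Gm.mulVec dm)
    (hFu : IsUnit Fu) (hGm : IsUnit Gm)
    (hρ' : specRad (Fu⁻¹ * Fm * Gm⁻¹ * Gu) < 1) :
    ∃ 𝒰 ∈ 𝓝 Ustar, ∃ ℳ ∈ 𝓝 Mstar,
      ∀ (U : ℕ → (Fin n → ℝ)) (M : ℕ → (Fin m → ℝ)),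
        (∀ k, 1 ≤ k → U k ∈ 𝒰) → (∀ k, M k ∈ ℳ) →
        (∀ k, 1 ≤ k → F (U k, M (k - 1)) = 0 ∧ G (U k, M k) = 0) →
        Tendsto U atTop (𝓝 Ustar) ∧
        Filter.limsup (fun k : ℕ => ‖U k - Ustar‖ ^ ((k : ℝ)⁻¹)) atTop
          ≤ specRad (Fu⁻¹ * Fm * Gm⁻¹ * Gu) := by
  obtain ⟨C, hloc⟩ := sweep_local_estimate (hF.differentiable one_ne_zero _)
    (hG.differentiable one_ne_zero _) hFstar hGstar hdF hdG hFu hGm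
  obtain ⟨s, hρs, hs1⟩ := exists_between hρ'
  obtain ⟨ε₀, hε₀, D, hD⟩ := exists_norm_le_geometric_of_perturbed hρs
  obtain ⟨δ, hδ, hball⟩ := Metric.eventually_nhds_iff_ball.1 (hloc ε₀ hε₀)
  refine ⟨Metric.ball Ustar δ, Metric.ball_mem_nhds _ hδ, Metric.ball Mstar δ,
    Metric.ball_mem_nhds _ hδ, fun U M hU hM hUM => ?_⟩
  have hsweep : ∀ k, 1 ≤ k → F (U (k + 1), M k) = 0 ∧ G (U k, M k) = 0 := fun k hk =>
    ⟨by simpa using (hUM (k + 1) (by omega)).1, (hUM k hk).2⟩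
  have hstep := fun k (hk : 1 ≤ k) => hball (U k, U (k + 1), M k)
    (by simp only [← ball_prod_same, Set.mem_prod]; exact ⟨hU k hk, hU _ (by omega), hM k⟩)
    (hsweep k hk).1 (hsweep k hk).2
  have hU : Tendsto (fun k => U k - Ustar) atTop (𝓝 0) := by
    refine (tendsto_add_atTop_iff_nat 1).1 (squeeze_zero_norm (fun j => hD
      (fun j => U (j + 1) - Ustar) (fun j => (hstep (j + 1) le_add_self).1) j) ?_)
    simpa using ((tendsto_pow_atTop_nhds_zero_of_lt_one ((specRad_nonneg _).trans hρs.le)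
      hs1).const_mul D).mul_const ‖U 1 - Ustar‖
  have hM : Tendsto (fun k => M k - Mstar) atTop (𝓝 0) := by
    refine squeeze_zero_norm' ?_
      (by simpa using (tendsto_zero_iff_norm_tendsto_zero.1 hU).const_mul C)
    filter_upwards [eventually_ge_atTop 1] with k hk using (hstep k hk).2
  have htriple : Tendsto (fun k => (U k, U (k + 1), M k)) atTop (𝓝 (Ustar, Ustar, Mstar)) := by
    rw [tendsto_sub_nhds_zero_iff] at hU hM
    exact hU.prodMk_nhds ((hU.comp (tendsto_add_atTop_nat 1)).prodMk_nhds hM)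
  refine ⟨tendsto_sub_nhds_zero_iff.1 hU, limsup_norm_rpow_inv_le_specRad fun ε hε => ?_⟩
  filter_upwards [htriple.eventually (hloc ε hε), eventually_ge_atTop 1] with k hk hk1
  exact (hk (hsweep k hk1).1 (hsweep k hk1).2).1
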